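/- Let m > 10 and let X be a graph satisfying condition (♯,m). Let α be a geodesic circle in X, let e ∈ X, and let p ∈ α satisfy d(e,α) = d(e,p) = R. Then for every x ∈ α one has d(e,x) ≥ R + length(\overline{xp}) − 100m, where \overline{xp} is the shorter of the two arcs of α joining x and p. -/
import Mathlib


universe u v

/-- A *geodesic* metric space: any two points are joined by a geodesic, i.e. an
isometric embedding of the real interval `[0, dist x y]` sending the endpoints
to the given points. -/
def GeodesicSpace (X : Type u) [MetricSpace X] : Prop :=
  ∀ x y : X, ∃ f : ℝ → X, f 0 = x ∧ f (dist x y) = y ∧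
    ∀ s ∈ Set.Icc (0 : ℝ) (dist x y), ∀ t ∈ Set.Icc (0 : ℝ) (dist x y),
      dist (f s) (f t) = |s - t|

/-- A *simple closed curve* in a topological space: the image of the circle
under an injective continuous map. -/
def IsSimpleClosedCurve {X : Type u} [TopologicalSpace X] (S : Set X) : Prop :=
  ∃ f : AddCircle (1 : ℝ) → X, Continuous f ∧ Function.Injective f ∧ Set.range f = S

/-- A *cactus*: a geodesic metric space in which any two distinct simple closed
curves intersect in at most one point. -/
def IsCactus (C : Type u) [MetricSpace C] : Prop :=
  GeodesicSpace C ∧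
    ∀ S₁ S₂ : Set C, IsSimpleClosedCurve S₁ → IsSimpleClosedCurve S₂ → S₁ ≠ S₂ →
      (S₁ ∩ S₂).Subsingleton

/-- `f : X → Y` is a `(K, L)`-quasi-isometry:
`(1/K) d(x,x') - L ≤ d(f x, f x') ≤ K d(x,x') + L` and every point of `Y` is
within distance `L` of the image. -/
def IsQuasiIsometry {X : Type u} {Y : Type v} [MetricSpace X] [MetricSpace Y]
    (K L : ℝ) (f : X → Y) : Prop :=
  1 ≤ K ∧ 0 ≤ L ∧
    (∀ x x' : X,
      (1 / K) * dist x x' - L ≤ dist (f x) (f x') ∧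
        dist (f x) (f x') ≤ K * dist x x' + L) ∧
    ∀ y : Y, ∃ x : X, dist y (f x) ≤ L

/-- `X` is `(K, L)`-quasi-isometric to some cactus. -/
def IsQuasiIsometricToCactusWith (X : Type u) [iX : MetricSpace X] (K L : ℝ) : Prop :=
  ∃ (C : Type u) (iC : MetricSpace C), @IsCactus C iC ∧
    ∃ f : X → C, @IsQuasiIsometry X C iX iC K L f

/-- `X` is quasi-isometric to some cactus. -/
def QuasiIsometricToCactus (X : Type u) [MetricSpace X] : Prop :=
  ∃ K L : ℝ, IsQuasiIsometricToCactusWith X K L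

/-- Condition `(♯, m)`: for any `x, y` with `d(x,y) ≥ 10 m` there are points
`a, b` with `d(x, {a,b}) ≥ 4m`, `d(y, {a,b}) ≥ 4m` such that `x` and `y` lie in
distinct connected components of `X \ N_m({a,b})`, where
`N_m(A) = {x | d(x,A) < m}` is the open `m`-neighbourhood (`Metric.thickening`). -/
def SharpCondition (X : Type u) [MetricSpace X] (m : ℝ) : Prop :=
  ∀ x y : X, 10 * m ≤ dist x y →
    ∃ a b : X,
      4 * m ≤ Metric.infDist x ({a, b} : Set X) ∧
      4 * m ≤ Metric.infDist y ({a, b} : Set X) ∧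
      connectedComponentIn (Metric.thickening m ({a, b} : Set X))ᶜ x ≠
        connectedComponentIn (Metric.thickening m ({a, b} : Set X))ᶜ y

/-- A *theta curve* in `X`: a continuous map from the theta graph
(the unit circle together with a diameter) to `X`.  It is encoded by its
restrictions to the three arcs joining the endpoints `a, b` of the diameter,
i.e. by three continuous paths `p 0, p 1, p 2 : [0,1] → X` from `a` to `b`. -/
structure ThetaCurve (X : Type u) [MetricSpace X] where
  a : X
  b : X
  p : Fin 3 → ℝ → X
  cont : ∀ i, ContinuousOn (p i) (Set.Icc 0 1)
  map_zero : ∀ i, p i 0 = a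
  map_one : ∀ i, p i 1 = b

/-- The theta curve is *`M`-fat*: there are subarcs `α i ∋ a` and `β i ∋ b` of
the arc `p i` (images of subintervals `[0, s i]`, `[t i, 1]`) such that, with
`p' i = p i \ (α i ∪ β i)`:
(1) each `p' i` is nonempty and `d(u,v) ≥ M` for `u ∈ p' i`, `v ∈ p' j`, `i ≠ j`;
(2) `p' i ∩ α j = ∅` and `p' i ∩ β j = ∅` for all `i, j`;
(3) `d(u,v) ≥ 2M` for all `u ∈ α 0 ∪ α 1 ∪ α 2` and `v ∈ β 0 ∪ β 1 ∪ β 2`. -/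
def ThetaCurve.IsFat {X : Type u} [MetricSpace X] (θ : ThetaCurve X) (M : ℝ) : Prop :=
  ∃ s t : Fin 3 → ℝ,
    (∀ i, s i ∈ Set.Icc (0 : ℝ) 1) ∧ (∀ i, t i ∈ Set.Icc (0 : ℝ) 1) ∧
    let α : Fin 3 → Set X := fun i => θ.p i '' Set.Icc 0 (s i)
    let β : Fin 3 → Set X := fun i => θ.p i '' Set.Icc (t i) 1
    let p' : Fin 3 → Set X := fun i => θ.p i '' Set.Icc 0 1 \ (α i ∪ β i)
    (∀ i, (p' i).Nonempty) ∧
      (∀ i j, i ≠ j → ∀ u ∈ p' i, ∀ v ∈ p' j, M ≤ dist u v) ∧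
      (∀ i j, p' i ∩ α j = ∅ ∧ p' i ∩ β j = ∅) ∧
      (∀ u ∈ α 0 ∪ α 1 ∪ α 2, ∀ v ∈ β 0 ∪ β 1 ∪ β 2, 2 * M ≤ dist u v)

/-- The theta curve is *embedded* (the corresponding map from the theta graph
is injective). -/
def ThetaCurve.Embedded {X : Type u} [MetricSpace X] (θ : ThetaCurve X) : Prop :=
  θ.a ≠ θ.b ∧ (∀ i, Set.InjOn (θ.p i) (Set.Icc 0 1)) ∧
    ∀ i j, i ≠ j →
      (θ.p i '' Set.Icc 0 1) ∩ (θ.p j '' Set.Icc 0 1) ⊆ {θ.a, θ.b}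

/-- `X` contains no `M`-fat theta curve. -/
def HasNoFatTheta (X : Type u) [MetricSpace X] (M : ℝ) : Prop :=
  ¬ ∃ θ : ThetaCurve X, θ.IsFat M

/-- `X` is (isometric to) the metric realization of a connected simplicial graph
with all edges of length `1`, equipped with the path metric: `X` is a geodesic
space which is covered by unit-length geodesic edges whose endpoints lie in a
vertex set `V`, distinct edges meet only in vertices, and distances between
vertices are (combinatorial, hence integer) path distances. -/
def IsMetricGraph (X : Type u) [MetricSpace X] : Prop :=
  GeodesicSpace X ∧
    ∃ (V : Set X) (E : Set (X × X)) (γ : X × X → ℝ → X),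
      (∀ e ∈ E, e.1 ∈ V ∧ e.2 ∈ V ∧ e.1 ≠ e.2) ∧
      (∀ e ∈ E, γ e 0 = e.1 ∧ γ e 1 = e.2 ∧
        ∀ s ∈ Set.Icc (0 : ℝ) 1, ∀ t ∈ Set.Icc (0 : ℝ) 1,
          dist (γ e s) (γ e t) = |s - t|) ∧
      (⋃ e ∈ E, γ e '' Set.Icc (0 : ℝ) 1) = Set.univ ∧
      (∀ e ∈ E, ∀ e' ∈ E, e ≠ e' →
        (γ e '' Set.Icc (0 : ℝ) 1) ∩ (γ e' '' Set.Icc (0 : ℝ) 1) ⊆ V) ∧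
      (∀ v ∈ V, ∀ w ∈ V, ∃ n : ℕ, dist v w = (n : ℝ))

/-- `S ⊆ X` is a *geodesic circle* of length `L`: the image of a circle of
circumference `L` (with its length metric) under an isometric embedding.  The
embedding is encoded by an `L`-periodic parametrization `g : ℝ → X` which is
isometric on arcs of length at most `L/2`.  (Note that, the embedding being
isometric, the length of the shorter arc of `S` between two of its points
equals their distance in `X`.) -/
def IsGeodesicCircle {X : Type u} [MetricSpace X] (S : Set X) (L : ℝ) : Prop :=
  0 < L ∧ ∃ g : ℝ → X, Set.range g = S ∧ (∀ s : ℝ, g (s + L) = g s) ∧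
    ∀ s t : ℝ, |s - t| ≤ L / 2 → dist (g s) (g t) = |s - t|

/-- `Z` is a connected component of the subset `F` (with its subspace topology). -/
def IsCompOf {X : Type u} [TopologicalSpace X] (Z F : Set X) : Prop :=
  ∃ z ∈ F, Z = connectedComponentIn F z

/-- `X` is a *quasi-tree*: it is quasi-isometric to a simplicial tree (with its
combinatorial path metric). -/
def IsQuasiTree (X : Type u) [MetricSpace X] : Prop :=
  ∃ (V : Type u) (T : SimpleGraph V), T.IsTree ∧
    ∃ (f : X → V) (K L : ℝ), 1 ≤ K ∧ 0 ≤ L ∧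
      (∀ x y : X, (1 / K) * dist x y - L ≤ (T.dist (f x) (f y) : ℝ) ∧
        (T.dist (f x) (f y) : ℝ) ≤ K * dist x y + L) ∧
      ∀ v : V, ∃ x : X, (T.dist v (f x) : ℝ) ≤ L

/-- A finite graph embedded in the plane `ℝ²`: a finite union of (injective,
continuous) arcs, any two of which meet only at common endpoints (vertices). -/
def IsFinitePlaneGraph (D : Set (ℝ × ℝ)) : Prop :=
  ∃ (n : ℕ) (e : Fin n → ℝ → ℝ × ℝ),
    (∀ i, ContinuousOn (e i) (Set.Icc 0 1) ∧ Set.InjOn (e i) (Set.Icc 0 1)) ∧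
    D = ⋃ i, e i '' Set.Icc (0 : ℝ) 1 ∧
    ∀ i j, i ≠ j →
      (e i '' Set.Icc (0 : ℝ) 1) ∩ (e j '' Set.Icc (0 : ℝ) 1) ⊆
        ({e i 0, e i 1} ∩ {e j 0, e j 1} : Set (ℝ × ℝ))

/-- `f` (a graph morphism defined on the plane graph `D`) is a *filling* of the
simple closed curve with image `A ⊆ X`. -/
def IsFilling {X : Type u} [MetricSpace X] (D : Set (ℝ × ℝ)) (f : ℝ × ℝ → X)
    (A : Set X) : Prop :=
  IsFinitePlaneGraph D ∧ ContinuousOn f D ∧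
    (∀ U : Set (ℝ × ℝ), IsCompOf U Dᶜ → ¬ Bornology.IsBounded U →
      IsSimpleClosedCurve (frontier U) ∧ f '' frontier U = A) ∧
    (∀ U : Set (ℝ × ℝ), IsCompOf U Dᶜ → Bornology.IsBounded U →
      ∃ L : ℝ, IsGeodesicCircle (f '' frontier U) L)

/-- The path (pseudo-)distance inside a subset `A` of a metric space: the
infimum of the lengths (total variations) of continuous paths in `A` joining
two points. -/
noncomputable def pathDist {P : Type u} [MetricSpace P] (A : Set P) (x y : P) : ENNReal :=
  ⨅ (γ : ℝ → P) (_ : ContinuousOn γ (Set.Icc 0 1)) (_ : Set.MapsTo γ (Set.Icc 0 1) A)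
    (_ : γ 0 = x) (_ : γ 1 = y), eVariationOn γ (Set.Icc 0 1)


/-- Two points of a preconnected subset of `F` lie in the same connected component in `F`. -/
private lemma same_comp_aux {X : Type u} [MetricSpace X] {F s : Set X} (hs : IsPreconnected s)
    (hsub : s ⊆ F) {u v : X} (hu : u ∈ s) (hv : v ∈ s) :
    connectedComponentIn F u = connectedComponentIn F v :=
  connectedComponentIn_eq (hs.subset_connectedComponentIn hu hsub hv)

/-- A map which is isometric on an interval is continuous on it. -/
private lemma contOn_of_iso_aux {X : Type u} [MetricSpace X] {f : ℝ → X} {d : ℝ}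
    (hiso : ∀ s ∈ Set.Icc (0:ℝ) d, ∀ t ∈ Set.Icc (0:ℝ) d, dist (f s) (f t) = |s - t|) :
    ContinuousOn f (Set.Icc 0 d) := by
  have h : LipschitzOnWith 1 f (Set.Icc 0 d) := by
    apply LipschitzOnWith.of_dist_le_mul
    intro x hx y hy
    rw [hiso x hx y hy, NNReal.coe_one, one_mul, Real.dist_eq]
  exact h.continuousOn

/-- Lemma: geodesic circles and distances.  Let `m > 10`, let
`X` be a graph satisfying `(♯, m)`, let `S` be a geodesic circle in `X`, let
`e ∈ X` and `p ∈ S` with `d(e,S) = d(e,p) = R`.  Then for any `x ∈ S`,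
`d(e,x) ≥ R + length(arc xp) - 100 m`.  (Since a geodesic circle is
isometrically embedded, the length of the shorter arc of `S` joining `x` and
`p` equals `dist x p`.) -/
theorem geodesic_circle_dist (m : ℝ) (hm : 10 < m)
    (X : Type u) [MetricSpace X] (hX : IsMetricGraph X)
    (hsharp : SharpCondition X m)
    (S : Set X) (L : ℝ) (hS : IsGeodesicCircle S L)
    (e p : X) (hp : p ∈ S) (R : ℝ)
    (heS : Metric.infDist e S = R) (hep : dist e p = R)
    (x : X) (hx : x ∈ S) :
    R + dist x p - 100 * m ≤ dist e x := by
  have hm0 : (0:ℝ) < m := by linarith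
  obtain ⟨hgeo, -⟩ := hX
  obtain ⟨hL, g, hrange, hper, hiso⟩ := hS
  -- the circle parametrization is 1-Lipschitz
  have glip : ∀ s t : ℝ, dist (g s) (g t) ≤ |s - t| := by
    have key : ∀ k : ℕ, ∀ s t : ℝ, t ≤ s → s - t ≤ k * (L / 2) → dist (g s) (g t) ≤ s - t := by
      intro k
      induction k with
      | zero =>
        intro s t hts hle
        have hst : s = t := by push_cast at hle; linarith
        rw [hst, dist_self]; linarith
      | succ k ih =>
        intro s t hts hle
        by_cases hsmall : s - t ≤ L / 2
        · have h1 : dist (g s) (g t) = |s - t| :=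
            hiso s t (by rw [abs_of_nonneg (by linarith)]; exact hsmall)
          rw [h1, abs_of_nonneg (by linarith)]
        · have h1 : dist (g s) (g (t + L / 2)) ≤ s - (t + L / 2) := by
            apply ih s (t + L / 2) (by linarith)
            push_cast at hle ⊢
            linarith
          have h2 : dist (g (t + L / 2)) (g t) = L / 2 := by
            have h := hiso (t + L / 2) t (by rw [show t + L/2 - t = L/2 by ring,
              abs_of_nonneg (by linarith)])
            rw [h, show t + L/2 - t = L/2 by ring, abs_of_nonneg (by linarith)]
          calc dist (g s) (g t) ≤ dist (g s) (g (t + L/2)) + dist (g (t + L/2)) (g t) :=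
                dist_triangle _ _ _
            _ ≤ (s - (t + L/2)) + L/2 := by linarith
            _ = s - t := by ring
    intro s t
    rcases le_total t s with h | h
    · obtain ⟨k, hk⟩ := exists_nat_ge ((s - t) / (L / 2))
      have hk' : s - t ≤ k * (L / 2) := by
        rw [div_le_iff₀ (by linarith)] at hk; linarith
      rw [abs_of_nonneg (by linarith)]
      exact key k s t h hk'
    · obtain ⟨k, hk⟩ := exists_nat_ge ((t - s) / (L / 2))
      have hk' : t - s ≤ k * (L / 2) := by
        rw [div_le_iff₀ (by linarith)] at hk; linarith
      rw [dist_comm, abs_sub_comm, abs_of_nonneg (by linarith)]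
      exact key k t s h hk'
  have gcont : Continuous g := by
    have h : LipschitzWith 1 g := by
      apply LipschitzWith.of_dist_le_mul
      intro s t
      rw [NNReal.coe_one, one_mul, Real.dist_eq]
      exact glip s t
    exact h.continuous
  -- periodicity for natural multiples
  have hperN : ∀ (n : ℕ) (s : ℝ), g (s + n * L) = g s := by
    intro n
    induction n with
    | zero => intro s; norm_num
    | succ n ih =>
      intro s
      rw [show s + ((n:ℕ) + 1 : ℕ) * L = (s + n * L) + L by push_cast; ring, hper, ih]
  -- the main iteration
  have aux : ∀ n : ℕ, ∀ w ζ : X, ζ ∈ S → dist e w + dist w x = dist e x →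
      dist w ζ ≤ 2 * m → dist e w ≤ n * m → R + dist x p - 100 * m ≤ dist e x := by
    intro n
    induction n with
    | zero =>
      intro w ζ hζS hline hwζ hcap
      have h1 : R ≤ dist e ζ := by rw [← heS]; exact Metric.infDist_le_dist_of_mem hζS
      have h2 : dist e ζ ≤ dist e w + dist w ζ := dist_triangle _ _ _
      have h3 : dist x p ≤ dist x e + dist e p := dist_triangle _ _ _
      have h4 : dist x e = dist e x := dist_comm _ _
      have h5 : (0:ℝ) ≤ dist e w := dist_nonneg
      push_cast at hcap
      linarith
    | succ n ih =>
      intro w ζ hζS hline hwζ hcap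
      have hRζ : R ≤ dist e ζ := by rw [← heS]; exact Metric.infDist_le_dist_of_mem hζS
      by_cases hnear : dist p ζ < 10 * m
      · -- termination: the circle point is near `p`
        have h2 : dist e ζ ≤ dist e w + dist w ζ := dist_triangle _ _ _
        have h3 : dist x p ≤ dist x w + dist w p := dist_triangle _ _ _
        have h4 : dist w p ≤ dist w ζ + dist ζ p := dist_triangle _ _ _
        have h5 : dist ζ p = dist p ζ := dist_comm _ _
        have h6 : dist x w = dist w x := dist_comm _ _
        linarith
      · push_neg at hnear
        obtain ⟨a, b, h4a, h4b, hcomp⟩ := hsharp p ζ hnear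
        set T := Metric.thickening m ({a, b} : Set X) with hT
        have hain : a ∈ ({a, b} : Set X) := by simp
        have hbin : b ∈ ({a, b} : Set X) := by simp
        have hpa : 4 * m ≤ dist p a := le_trans h4a (Metric.infDist_le_dist_of_mem hain)
        have hpb : 4 * m ≤ dist p b := le_trans h4a (Metric.infDist_le_dist_of_mem hbin)
        have hζa : 4 * m ≤ dist ζ a := le_trans h4b (Metric.infDist_le_dist_of_mem hain)
        have hζb : 4 * m ≤ dist ζ b := le_trans h4b (Metric.infDist_le_dist_of_mem hbin)
        -- circle coordinates for p and ζ
        have hp' : p ∈ Set.range g := by rw [hrange]; exact hp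
        obtain ⟨sp, hsp⟩ := hp'
        have hζ' : ζ ∈ Set.range g := by rw [hrange]; exact hζS
        obtain ⟨sζ₀, hsζ₀⟩ := hζ'
        -- normalize the parameter of ζ to be ≥ sp
        set sζ : ℝ := sζ₀ + (⌈(sp - sζ₀) / L⌉₊ : ℝ) * L with hsζdef
        have hsζ : g sζ = ζ := by rw [hsζdef, hperN, hsζ₀]
        have hsζ_ge : sp ≤ sζ := by
          have h := Nat.le_ceil ((sp - sζ₀) / L)
          rw [div_le_iff₀ hL] at h
          rw [hsζdef]; linarith
        -- bring it into [sp, sp + L)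
        set kf : ℕ := ⌊(sζ - sp) / L⌋₊ with hkf
        set β : ℝ := sζ - kf * L with hβdef
        have hgβ : g β = ζ := by
          have h := hperN kf β
          rw [hβdef, show sζ - (kf:ℝ) * L + (kf:ℝ) * L = sζ by ring] at h
          rw [hβdef, ← hsζ, ← h]
        have hβ1 : sp ≤ β := by
          have h : (kf:ℝ) ≤ (sζ - sp) / L := Nat.floor_le (div_nonneg (by linarith) hL.le)
          rw [le_div_iff₀ hL] at h
          rw [hβdef]; linarith
        have hβ2 : β ≤ sp + L := by
          have h : (sζ - sp) / L < (kf:ℝ) + 1 := Nat.lt_floor_add_one _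
          rw [div_lt_iff₀ hL] at h
          rw [hβdef]; linarith
        have hgspL : g (sp + L) = p := by rw [hper, hsp]
        -- each of the two arcs from p to ζ meets the thickening T
        have harcMeet : ∀ c₁ c₂ : ℝ, c₁ ≤ c₂ →
            connectedComponentIn Tᶜ (g c₁) ≠ connectedComponentIn Tᶜ (g c₂) →
            ∃ s ∈ Set.Icc c₁ c₂, g s ∈ T := by
          intro c₁ c₂ hc hne
          by_contra hno
          push_neg at hno
          apply hne
          apply same_comp_aux (isPreconnected_Icc.image g gcont.continuousOn)
          · rintro v ⟨s, hs, rfl⟩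
            exact hno s hs
          · exact ⟨c₁, ⟨le_rfl, hc⟩, rfl⟩
          · exact ⟨c₂, ⟨hc, le_rfl⟩, rfl⟩
        obtain ⟨s₁, hs₁I, hs₁T⟩ :=
          harcMeet sp β hβ1 (by rw [hsp, hgβ]; exact hcomp)
        obtain ⟨s₂, hs₂I, hs₂T⟩ :=
          harcMeet β (sp + L) hβ2 (by rw [hgβ, hgspL]; exact fun hEq => hcomp hEq.symm)
        -- the two arcs cannot meet the same ball (exclusivity)
        have hexcl : ∀ c : X, 4 * m ≤ dist p c → 4 * m ≤ dist ζ c →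
            dist (g s₁) c < m → dist (g s₂) c < m → False := by
          intro c hpc hζc hd1 hd2
          have m1 : 3 * m < dist p (g s₁) := by
            have h := dist_triangle p (g s₁) c
            linarith
          have m2 : 3 * m < dist ζ (g s₁) := by
            have h := dist_triangle ζ (g s₁) c
            linarith
          have m3 : 3 * m < dist p (g s₂) := by
            have h := dist_triangle p (g s₂) c
            linarith
          have m4 : 3 * m < dist ζ (g s₂) := by
            have h := dist_triangle ζ (g s₂) c
            linarith
          have q1 : 3 * m < s₁ - sp := by
            have h : dist p (g s₁) ≤ s₁ - sp := by
              rw [← hsp]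
              calc dist (g sp) (g s₁) ≤ |sp - s₁| := glip _ _
                _ = s₁ - sp := by rw [abs_sub_comm, abs_of_nonneg (by linarith [hs₁I.1])]
            linarith
          have q2 : 3 * m < β - s₁ := by
            have h : dist ζ (g s₁) ≤ β - s₁ := by
              rw [← hgβ]
              calc dist (g β) (g s₁) ≤ |β - s₁| := glip _ _
                _ = β - s₁ := abs_of_nonneg (by linarith [hs₁I.2])
            linarith
          have q3 : 3 * m < s₂ - β := by
            have h : dist ζ (g s₂) ≤ s₂ - β := by
              rw [← hgβ]
              calc dist (g β) (g s₂) ≤ |β - s₂| := glip _ _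
                _ = s₂ - β := by rw [abs_sub_comm, abs_of_nonneg (by linarith [hs₂I.1])]
            linarith
          have q4 : 3 * m < sp + L - s₂ := by
            have h : dist p (g s₂) ≤ sp + L - s₂ := by
              rw [← hgspL]
              calc dist (g (sp + L)) (g s₂) ≤ |sp + L - s₂| := glip _ _
                _ = sp + L - s₂ := abs_of_nonneg (by linarith [hs₂I.2])
            linarith
          have q5 : dist (g s₁) (g s₂) < 2 * m := by
            have h := dist_triangle (g s₁) c (g s₂)
            have h' : dist c (g s₂) = dist (g s₂) c := dist_comm _ _
            linarith
          by_cases hhalf : s₂ - s₁ ≤ L / 2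
          · have h : dist (g s₁) (g s₂) = s₂ - s₁ := by
              rw [hiso s₁ s₂ (by rw [abs_sub_comm, abs_of_nonneg (by linarith)]; linarith),
                abs_sub_comm, abs_of_nonneg (by linarith)]
            linarith
          · have hgs2 : g s₂ = g (s₂ - L) := by
              rw [← hper (s₂ - L), show s₂ - L + L = s₂ by ring]
            have h : dist (g s₁) (g (s₂ - L)) = s₁ - (s₂ - L) := by
              rw [hiso s₁ (s₂ - L) (by rw [abs_of_nonneg (by linarith)]; linarith),
                abs_of_nonneg (by linarith)]
            rw [hgs2] at q5
            linarith
        -- hence both cut points are m-close to the circle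
        rw [hT, Metric.mem_thickening_iff] at hs₁T hs₂T
        obtain ⟨z₁, hz₁, hd₁⟩ := hs₁T
        obtain ⟨z₂, hz₂, hd₂⟩ := hs₂T
        simp only [Set.mem_insert_iff, Set.mem_singleton_iff] at hz₁ hz₂
        have hgs₁S : g s₁ ∈ S := by rw [← hrange]; exact Set.mem_range_self s₁
        have hgs₂S : g s₂ ∈ S := by rw [← hrange]; exact Set.mem_range_self s₂
        have hnearS : (∃ ξ ∈ S, dist ξ a < m) ∧ (∃ ξ ∈ S, dist ξ b < m) := by
          rcases hz₁ with h1 | h1 <;> rcases hz₂ with h2 | h2 <;>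
            rw [h1] at hd₁ <;> rw [h2] at hd₂
          · exact (hexcl a hpa hζa hd₁ hd₂).elim
          · exact ⟨⟨g s₁, hgs₁S, hd₁⟩, ⟨g s₂, hgs₂S, hd₂⟩⟩
          · exact ⟨⟨g s₂, hgs₂S, hd₂⟩, ⟨g s₁, hgs₁S, hd₁⟩⟩
          · exact (hexcl b hpb hζb hd₁ hd₂).elim
        -- geodesics e–p, e–w, w–ζ
        obtain ⟨fp, hfp0, hfp1, hfpiso⟩ := hgeo e p
        obtain ⟨fw, hfw0, hfw1, hfwiso⟩ := hgeo e w
        obtain ⟨fj, hfj0, hfj1, hfjiso⟩ := hgeo w ζ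
        -- one of the three geodesic segments meets T
        have hmeet : (∃ u ∈ Set.Icc (0:ℝ) (dist e p), fp u ∈ T) ∨
            (∃ u ∈ Set.Icc (0:ℝ) (dist e w), fw u ∈ T) ∨
            (∃ u ∈ Set.Icc (0:ℝ) (dist w ζ), fj u ∈ T) := by
          by_contra hno
          push_neg at hno
          obtain ⟨hno1, hno2, hno3⟩ := hno
          apply hcomp
          have c1 : connectedComponentIn Tᶜ p = connectedComponentIn Tᶜ e := by
            apply same_comp_aux
              (isPreconnected_Icc.image fp (contOn_of_iso_aux hfpiso))
            · rintro v ⟨u, hu, rfl⟩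
              exact hno1 u hu
            · exact ⟨dist e p, ⟨dist_nonneg, le_rfl⟩, hfp1⟩
            · exact ⟨0, ⟨le_rfl, dist_nonneg⟩, hfp0⟩
          have c2 : connectedComponentIn Tᶜ e = connectedComponentIn Tᶜ w := by
            apply same_comp_aux
              (isPreconnected_Icc.image fw (contOn_of_iso_aux hfwiso))
            · rintro v ⟨u, hu, rfl⟩
              exact hno2 u hu
            · exact ⟨0, ⟨le_rfl, dist_nonneg⟩, hfw0⟩
            · exact ⟨dist e w, ⟨dist_nonneg, le_rfl⟩, hfw1⟩
          have c3 : connectedComponentIn Tᶜ w = connectedComponentIn Tᶜ ζ := by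
            apply same_comp_aux
              (isPreconnected_Icc.image fj (contOn_of_iso_aux hfjiso))
            · rintro v ⟨u, hu, rfl⟩
              exact hno3 u hu
            · exact ⟨0, ⟨le_rfl, dist_nonneg⟩, hfj0⟩
            · exact ⟨dist w ζ, ⟨dist_nonneg, le_rfl⟩, hfj1⟩
          rw [c1, c2, c3]
        rcases hmeet with ⟨u, huI, huT⟩ | ⟨u, huI, huT⟩ | ⟨u, huI, huT⟩
        · -- the crossing cannot be on [e,p] : contradiction with minimality of R
          exfalso
          rw [hT, Metric.mem_thickening_iff] at huT
          obtain ⟨z, hz, hdz⟩ := huT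
          simp only [Set.mem_insert_iff, Set.mem_singleton_iff] at hz
          have hpz : 4 * m ≤ dist p z := by rcases hz with rfl | rfl; exacts [hpa, hpb]
          obtain ⟨ξ, hξS, hξz⟩ : ∃ ξ ∈ S, dist ξ z < m := by
            rcases hz with rfl | rfl; exacts [hnearS.1, hnearS.2]
          have e1 : dist e (fp u) = u := by
            have h := hfpiso 0 ⟨le_rfl, dist_nonneg⟩ u huI
            rw [hfp0, zero_sub, abs_neg, abs_of_nonneg huI.1] at h
            exact h
          have e2 : dist (fp u) p = dist e p - u := by
            have h := hfpiso u huI (dist e p) ⟨dist_nonneg, le_rfl⟩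
            rw [hfp1, abs_sub_comm, abs_of_nonneg (by linarith [huI.2])] at h
            exact h
          have e3 : 3 * m < dist (fp u) p := by
            have h := dist_triangle p (fp u) z
            have h' : dist p (fp u) = dist (fp u) p := dist_comm _ _
            linarith
          have e4 : R ≤ dist e ξ := by rw [← heS]; exact Metric.infDist_le_dist_of_mem hξS
          have e5 : dist e ξ ≤ dist e (fp u) + dist (fp u) z + dist z ξ := dist_triangle4 _ _ _ _
          have e6 : dist z ξ = dist ξ z := dist_comm _ _
          linarith
        · -- the recursive case : the crossing is on [e,w]
          rw [hT, Metric.mem_thickening_iff] at huT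
          obtain ⟨z, hz, hdz⟩ := huT
          simp only [Set.mem_insert_iff, Set.mem_singleton_iff] at hz
          have hζz : 4 * m ≤ dist ζ z := by rcases hz with rfl | rfl; exacts [hζa, hζb]
          obtain ⟨ξ, hξS, hξz⟩ : ∃ ξ ∈ S, dist ξ z < m := by
            rcases hz with rfl | rfl; exacts [hnearS.1, hnearS.2]
          have e1 : dist e (fw u) = u := by
            have h := hfwiso 0 ⟨le_rfl, dist_nonneg⟩ u huI
            rw [hfw0, zero_sub, abs_neg, abs_of_nonneg huI.1] at h
            exact h
          have e2 : dist (fw u) w = dist e w - u := by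
            have h := hfwiso u huI (dist e w) ⟨dist_nonneg, le_rfl⟩
            rw [hfw1, abs_sub_comm, abs_of_nonneg (by linarith [huI.2])] at h
            exact h
          -- descent : the crossing is at distance > m from w
          have d1 : 2 * m ≤ dist w z := by
            have h := dist_triangle ζ w z
            have h' : dist ζ w = dist w ζ := dist_comm _ _
            linarith
          have d2 : m < dist w (fw u) := by
            have h := dist_triangle w (fw u) z
            linarith
          have d3 : dist e (fw u) ≤ n * m := by
            have h' : dist w (fw u) = dist (fw u) w := dist_comm _ _
            push_cast at hcap
            linarith
          -- the new point is still on a geodesic line from e to x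
          have l1 : dist e x ≤ dist e (fw u) + dist (fw u) x := dist_triangle _ _ _
          have l2 : dist (fw u) x ≤ dist (fw u) w + dist w x := dist_triangle _ _ _
          have l3 : dist e (fw u) + dist (fw u) x = dist e x := by linarith
          have hw'ξ : dist (fw u) ξ ≤ 2 * m := by
            have h := dist_triangle (fw u) z ξ
            have h' : dist z ξ = dist ξ z := dist_comm _ _
            linarith
          exact ih (fw u) ξ hξS l3 hw'ξ d3
        · -- the crossing cannot be on the short jump [w,ζ]
          exfalso
          rw [hT, Metric.mem_thickening_iff] at huT
          obtain ⟨z, hz, hdz⟩ := huT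
          simp only [Set.mem_insert_iff, Set.mem_singleton_iff] at hz
          have hζz : 4 * m ≤ dist ζ z := by rcases hz with rfl | rfl; exacts [hζa, hζb]
          have j1 : dist (fj u) ζ = dist w ζ - u := by
            have h := hfjiso u huI (dist w ζ) ⟨dist_nonneg, le_rfl⟩
            rw [hfj1, abs_sub_comm, abs_of_nonneg (by linarith [huI.2])] at h
            exact h
          have j2 : dist ζ z ≤ dist ζ (fj u) + dist (fj u) z := dist_triangle _ _ _
          have j3 : dist ζ (fj u) = dist (fj u) ζ := dist_comm _ _
          have j4 : (0:ℝ) ≤ u := huI.1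
          linarith
  -- conclude, starting the iteration at w = ζ = x
  obtain ⟨N, hN⟩ := exists_nat_ge (dist e x / m)
  apply aux N x x hx
  · rw [dist_self]; ring
  · rw [dist_self]; linarith
  · calc dist e x = dist e x / m * m := by field_simp
      _ ≤ N * m := mul_le_mul_of_nonneg_right hN hm0.le
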